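/- arXiv:1406.7841 — 4 statements merged into one kernel-verified Lean document; each statement's English description precedes it below -/
import Mathlib

section
/- Let F be a finite tree and let S : E(F) → Set V be an assignment of a vertex subset S_e of some ground set to each edge e. For a fixed element w, orient each edge e of F away from a fixed root leaf r if w ∈ S_e and towards r otherwise. Suppose that no vertex of F has out-degree ≥ 2 in this orientation. Then there is a unique vertex φ(w) of F that is a sink of this orientation, and for any edge e of F, e separates φ(w) from r in F if and only if w ∈ S_e. -/
private lemma reach_endpoint_aux {V : Type*} {F : SimpleGraph V} (a b : V) {x y : V}
    (p : F.Walk x y) :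
    (F.deleteEdges {s(a,b)}).Reachable x y ∨ (F.deleteEdges {s(a,b)}).Reachable x a ∨
      (F.deleteEdges {s(a,b)}).Reachable x b := by
  induction p with
  | nil => exact Or.inl (SimpleGraph.Reachable.refl _)
  | @cons u v z h q ih =>
    by_cases he : s(u, v) = s(a, b)
    · rw [Sym2.eq_iff] at he
      rcases he with ⟨rfl, rfl⟩ | ⟨rfl, rfl⟩
      · exact Or.inr (Or.inl (SimpleGraph.Reachable.refl _))
      · exact Or.inr (Or.inr (SimpleGraph.Reachable.refl _))
    · have hadj : (F.deleteEdges {s(a,b)}).Adj u v := by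
        simp [SimpleGraph.deleteEdges_adj, h, he]
      rcases ih with h' | h' | h'
      · exact Or.inl (hadj.reachable.trans h')
      · exact Or.inr (Or.inl (hadj.reachable.trans h'))
      · exact Or.inr (Or.inr (hadj.reachable.trans h'))

/-- Orient each edge `e` of a tree `F` away from the root leaf `r` iff `w ∈ S_e`.
If no vertex gets out-degree ≥ 2, then there is a unique sink `φ(w)`, and an edge `e`
separates `φ(w)` from `r` if and only if `w ∈ S_e`. -/
theorem stmt8 {V α : Type*} [Fintype V] [DecidableEq V]
    (F : SimpleGraph V) [DecidableRel F.Adj] (hF : F.IsTree)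
    (r : V) (hr : F.degree r = 1)
    (Sfun : Sym2 V → Set α) (w : α)
    (D : V → V → Prop)
    (hD : ∀ a b : V, D a b ↔ F.Adj a b ∧
      (w ∈ Sfun s(a,b) ↔ ¬ (F.deleteEdges {s(a,b)}).Reachable b r))
    (hout : ∀ a b c : V, D a b → D a c → b = c) :
    ∃ φw : V, (∀ x : V, ¬ D φw x) ∧ (∀ s : V, (∀ x : V, ¬ D s x) → s = φw) ∧
      ∀ a b : V, F.Adj a b →
        (¬ (F.deleteEdges {s(a,b)}).Reachable φw r ↔ w ∈ Sfun s(a,b)) := by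
  classical
  have hconn := hF.isConnected
  have hacyc : F.IsAcyclic := hF.2
  -- every edge of the tree is a bridge
  have hbridge : ∀ a b : V, F.Adj a b → ¬ (F.deleteEdges {s(a,b)}).Reachable a b := by
    intro a b hab
    have := (SimpleGraph.isAcyclic_iff_forall_adj_isBridge.mp hacyc) hab
    exact ((SimpleGraph.isBridge_iff).mp this)
  -- every vertex reaches a or b after deleting edge ab
  have hreach : ∀ a b x : V, (F.deleteEdges {s(a,b)}).Reachable x a ∨
      (F.deleteEdges {s(a,b)}).Reachable x b := by
    intro a b x
    obtain ⟨p⟩ := hconn x a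
    rcases reach_endpoint_aux a b p with h | h | h
    · exact Or.inl h
    · exact Or.inl h
    · exact Or.inr h
  -- exactly one endpoint of an edge reaches r
  have hrexcl : ∀ a b : V, F.Adj a b →
      ¬ ((F.deleteEdges {s(a,b)}).Reachable a r ∧ (F.deleteEdges {s(a,b)}).Reachable b r) := by
    rintro a b hab ⟨h1, h2⟩
    exact hbridge a b hab (h1.trans h2.symm)
  have hrtot : ∀ a b : V, F.Adj a b →
      (F.deleteEdges {s(a,b)}).Reachable a r ∨ (F.deleteEdges {s(a,b)}).Reachable b r := by
    intro a b hab
    rcases hreach a b r with h | h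
    · exact Or.inl h.symm
    · exact Or.inr h.symm
  -- antisymmetry of D
  have hanti : ∀ a b : V, D a b → ¬ D b a := by
    intro a b h1 h2
    have e1 := (hD a b).mp h1
    have e2 := (hD b a).mp h2
    rw [Sym2.eq_swap] at e2
    have hab := e1.1
    have hiff : ¬ (F.deleteEdges {s(a,b)}).Reachable b r ↔
        ¬ (F.deleteEdges {s(a,b)}).Reachable a r := e1.2.symm.trans e2.2
    rcases hrtot a b hab with h | h
    · have hnb : ¬ (F.deleteEdges {s(a,b)}).Reachable b r :=
        fun hh => hrexcl a b hab ⟨h, hh⟩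
      exact (hiff.mp hnb) h
    · have hna : ¬ (F.deleteEdges {s(a,b)}).Reachable a r :=
        fun hh => hrexcl a b hab ⟨hh, h⟩
      exact (hiff.mpr hna) h
  -- totality of D on edges
  have htot : ∀ a b : V, F.Adj a b → D a b ∨ D b a := by
    intro a b hab
    by_cases hw : w ∈ Sfun s(a,b)
    · rcases hrtot a b hab with h | h
      · left
        exact (hD a b).mpr ⟨hab, iff_of_true hw (fun hh => hrexcl a b hab ⟨h, hh⟩)⟩
      · right
        rw [hD b a, Sym2.eq_swap]
        exact ⟨hab.symm, iff_of_true hw (fun hh => hrexcl a b hab ⟨hh, h⟩)⟩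
    · rcases hrtot a b hab with h | h
      · right
        rw [hD b a, Sym2.eq_swap]
        exact ⟨hab.symm, iff_of_false hw (not_not_intro h)⟩
      · left
        exact (hD a b).mpr ⟨hab, iff_of_false hw (not_not_intro h)⟩
  have hDadj : ∀ a b : V, D a b → F.Adj a b := fun a b h => ((hD a b).mp h).1
  -- tail map : each edge maps to its tail
  have htail : ∀ e ∈ F.edgeFinset, ∃ p : V × V, D p.1 p.2 ∧ s(p.1, p.2) = e := by
    intro e he
    induction e with
    | h a b =>
      have hab : F.Adj a b := by
        rw [SimpleGraph.mem_edgeFinset, SimpleGraph.mem_edgeSet] at he; exact he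
      rcases htot a b hab with h | h
      · exact ⟨(a, b), h, rfl⟩
      · exact ⟨(b, a), h, Sym2.eq_swap⟩
  let tail : Sym2 V → V := fun e =>
    if h : ∃ p : V × V, D p.1 p.2 ∧ s(p.1, p.2) = e then h.choose.1 else r
  have htail_spec : ∀ e ∈ F.edgeFinset, ∃ v : V, D (tail e) v ∧ s(tail e, v) = e := by
    intro e he
    have h := htail e he
    simp only [tail, dif_pos h]
    exact ⟨h.choose.2, h.choose_spec.1, h.choose_spec.2⟩
  -- tail is injective, edgeFinset has card < card V, so there is a sink
  have hinj : ∀ e ∈ F.edgeFinset, ∀ e' ∈ F.edgeFinset, tail e = tail e' → e = e' := by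
    intro e he e' he' h
    obtain ⟨v, hv, hev⟩ := htail_spec e he
    obtain ⟨v', hv', hev'⟩ := htail_spec e' he'
    rw [h] at hv hev
    calc e = s(tail e', v) := hev.symm
      _ = s(tail e', v') := by rw [hout _ _ _ hv hv']
      _ = e' := hev'
  have hcard : (F.edgeFinset.image tail).card < Fintype.card V := by
    rw [Finset.card_image_of_injOn (fun e he e' he' => hinj e he e' he')]
    have := hF.card_edgeFinset
    omega
  obtain ⟨φw, hφnot⟩ : ∃ x : V, x ∉ F.edgeFinset.image tail := by
    by_contra hcon
    push_neg at hcon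
    have : (Finset.univ : Finset V) ⊆ F.edgeFinset.image tail := fun x _ => hcon x
    have := Finset.card_le_card this
    rw [Finset.card_univ] at this
    omega
  have hsink : ∀ x : V, ¬ D φw x := by
    intro x hx
    have hadj := hDadj _ _ hx
    have he : s(φw, x) ∈ F.edgeFinset := by
      rw [SimpleGraph.mem_edgeFinset, SimpleGraph.mem_edgeSet]; exact hadj
    obtain ⟨v, hv, hev⟩ := htail_spec _ he
    have : tail s(φw, x) = φw := by
      rcases Sym2.eq_iff.mp hev with ⟨h1, h2⟩ | ⟨h1, h2⟩
      · exact h1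
      · exact absurd hx (hanti _ _ (h2 ▸ h1 ▸ hv))
    exact hφnot (Finset.mem_image.mpr ⟨_, he, this⟩)
  -- key lemma: walking along a path to φw, a backward-pointing out-edge gives False
  have key0 : ∀ (x t : V) (p : F.Walk x t), p.IsPath → (∀ y : V, ¬ D t y) →
      ∀ y : V, D x y → y ∉ p.support → False := by
    intro x t p
    induction p with
    | nil => exact fun _ ht y hy _ => ht y hy
    | @cons u z _ h q ih =>
      intro hp ht y hy hys
      rw [SimpleGraph.Walk.cons_isPath_iff] at hp
      have hz : z ∈ (SimpleGraph.Walk.cons h q).support := by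
        simp [SimpleGraph.Walk.support_cons]
      have hDzu : D z u := by
        rcases htot u z h with h' | h'
        · exact absurd (hout _ _ _ hy h') (fun hh => hys (hh ▸ hz))
        · exact h'
      exact ih hp.1 ht u hDzu hp.2
  have key : ∀ (x : V) (p : F.Walk x φw), p.IsPath → ∀ y : V, D x y → y ∉ p.support → False :=
    fun x p hp => key0 x φw p hp hsink
  -- edges point toward φw: if D a b then φw is not on a's side
  have hside : ∀ a b : V, F.Adj a b → D a b →
      ¬ (F.deleteEdges {s(a,b)}).Reachable φw a := by
    intro a b hab hDab hφa
    obtain ⟨p0⟩ := hφa.symm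
    set p1 : (F.deleteEdges {s(a,b)}).Walk a φw := p0.toPath.1 with hp1def
    have hp1 : p1.IsPath := p0.toPath.2
    have hb : b ∉ p1.support := by
      intro hb
      exact hbridge a b hab (SimpleGraph.Walk.reachable (p1.takeUntil b hb))
    have hedges : ∀ e ∈ p1.edges, e ∈ F.edgeSet := by
      intro e he
      exact SimpleGraph.edgeSet_mono (F.deleteEdges_le {s(a,b)})
        (p1.edges_subset_edgeSet he)
    refine key a (p1.transfer F hedges) (hp1.transfer hedges) b hDab ?_
    rw [SimpleGraph.Walk.support_transfer]
    exact hb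
  refine ⟨φw, hsink, ?_, ?_⟩
  · -- uniqueness of sink
    intro s hs
    by_contra hne
    obtain ⟨p0⟩ := hconn s φw
    have hp1 : (p0.toPath.1 : F.Walk s φw).IsPath := p0.toPath.2
    cases hc : (p0.toPath.1 : F.Walk s φw) with
    | nil => exact hne rfl
    | @cons _ z _ h q =>
      rw [hc, SimpleGraph.Walk.cons_isPath_iff] at hp1
      have hDzs : D z s := by
        rcases htot s z h with h' | h'
        · exact absurd h' (hs z)
        · exact h'
      exact key z q hp1.1 s hDzs hp1.2
  · -- the separation property
    intro a b hab
    have main : ∀ a b : V, F.Adj a b → (F.deleteEdges {s(a,b)}).Reachable a r →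
        (¬ (F.deleteEdges {s(a,b)}).Reachable φw r ↔ w ∈ Sfun s(a,b)) := by
      intro a b hab har
      have hbr : ¬ (F.deleteEdges {s(a,b)}).Reachable b r :=
        fun hh => hrexcl a b hab ⟨har, hh⟩
      have hwD : w ∈ Sfun s(a,b) ↔ D a b := by
        rw [hD a b]
        constructor
        · exact fun hw => ⟨hab, iff_of_true hw hbr⟩
        · exact fun h => h.2.mpr hbr
      rw [hwD]
      constructor
      · intro hφr
        rcases htot a b hab with h | h
        · exact h
        · exfalso
          have hφb : ¬ (F.deleteEdges {s(a,b)}).Reachable φw b := by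
            have := hside b a hab.symm h
            rwa [Sym2.eq_swap] at this
          rcases hreach a b φw with h' | h'
          · exact hφr (h'.trans har)
          · exact hφb h'
      · intro hDab hφr
        have hφa : ¬ (F.deleteEdges {s(a,b)}).Reachable φw a := hside a b hab hDab
        rcases hreach a b φw with h' | h'
        · exact hφa h'
        · exact hbr (h'.symm.trans hφr)
    rcases hrtot a b hab with h | h
    · exact main a b hab h
    · have := main b a hab.symm (by rwa [Sym2.eq_swap])
      rwa [Sym2.eq_swap] at this
end

section
/- Let F be a finite tree with root leaf r, and for each edge e let S_e ⊆ V(T) be given (cuts in another tree T). Fix w and orient F as above (e away from r iff w ∈ S_e), and assume out-degree ≤ 1 everywhere, with unique sink φ(w). Then for any two elements u, v with sinks φ(u), φ(v): an edge e of F separates φ(u) from φ(v) if and only if exactly one of u, v belongs to S_e. -/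
/-!
Removing an edge `ab` of a tree leaves two components, and a vertex lies in `b`'s component
iff it does not lie in `a`'s. If `w` orients `ab` as `a → b`, the sink `φ w` lies on `b`'s side:
walking from `a` towards a sink on `a`'s side, out-degree at most one forces every edge of the
path to point back towards `a`, so its last vertex has an out-edge. So `φ w` is on `b`'s side iff
`w` orients `ab` towards `b`, i.e. iff `w ∈ S_e` holds exactly when `b` is the side away from
`r`; comparing this for `x` and `y` gives the claim.
-/

namespace SimpleGraph

variable {V : Type*} {G : SimpleGraph V} {a b : V}

lemma IsAcyclic.isBridge_of_adj (hG : G.IsAcyclic) (hab : G.Adj a b) : G.IsBridge s(a, b) :=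
  isAcyclic_iff_forall_adj_isBridge.mp hG hab

lemma Walk.reachable_deleteEdges_or {u v : V} (p : G.Walk u v)
    (hv : (G.deleteEdges {s(a, b)}).Reachable v a ∨ (G.deleteEdges {s(a, b)}).Reachable v b) :
    (G.deleteEdges {s(a, b)}).Reachable u a ∨ (G.deleteEdges {s(a, b)}).Reachable u b := by
  induction p with
  | nil => exact hv
  | @cons u c v huc q ih =>
    by_cases he : s(u, c) = s(a, b)
    · rcases Sym2.eq_iff.mp he with ⟨rfl, -⟩ | ⟨rfl, -⟩
      · exact Or.inl .rfl
      · exact Or.inr .rfl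
    · have huc' : (G.deleteEdges {s(a, b)}).Adj u c := deleteEdges_adj.mpr ⟨huc, he⟩
      exact (ih hv).imp huc'.reachable.trans huc'.reachable.trans

lemma Connected.reachable_deleteEdges_iff_not (hG : G.Connected) (hab : G.IsBridge s(a, b))
    (v : V) :
    (G.deleteEdges {s(a, b)}).Reachable a v ↔ ¬ (G.deleteEdges {s(a, b)}).Reachable b v := by
  refine ⟨fun hav hbv => isBridge_iff.mp hab (hav.trans hbv.symm), fun hbv => ?_⟩
  obtain ⟨p⟩ := hG v a
  exact ((p.reachable_deleteEdges_or (Or.inl .rfl)).resolve_right (hbv ·.symm)).symm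

lemma Connected.reachable_deleteEdges_iff (hG : G.Connected) (hab : G.IsBridge s(a, b))
    (u v : V) :
    (G.deleteEdges {s(a, b)}).Reachable u v ↔
      ((G.deleteEdges {s(a, b)}).Reachable b u ↔ (G.deleteEdges {s(a, b)}).Reachable b v) := by
  have hu := hG.reachable_deleteEdges_iff_not hab u
  have hv := hG.reachable_deleteEdges_iff_not hab v
  refine ⟨fun huv => ⟨(·.trans huv), (·.trans huv.symm)⟩, fun h => ?_⟩
  by_cases hbu : (G.deleteEdges {s(a, b)}).Reachable b u
  · exact hbu.symm.trans (h.mp hbu)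
  · exact (hu.mpr hbu).symm.trans (hv.mpr (mt h.mpr hbu))

section Orientation

variable {R : V → V → Prop} (horient : ∀ ⦃u v⦄, G.Adj u v → R u v ∨ R v u)
  (hout : ∀ ⦃u v v'⦄, R u v → R u v' → v = v')
include horient hout

lemma Walk.IsPath.exists_rel_end {u z : V} (p : G.Walk u z) (hp : p.IsPath) (hub : R u b)
    (hb : b ∉ p.support) : ∃ c, R z c := by
  induction p generalizing b with
  | nil => exact ⟨b, hub⟩
  | @cons u c z huc q ih =>
    rw [Walk.cons_isPath_iff] at hp
    have hcb : c ≠ b := fun h => hb (by simp [← h])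
    have hcu : R c u := (horient huc).resolve_left fun huc' => hcb (hout huc' hub)
    exact ih hp.1 hcu hp.2

lemma IsBridge.not_reachable_deleteEdges_of_rel {z : V} (hab : G.IsBridge s(a, b))
    (hRab : R a b) (hz : ∀ c, ¬ R z c) : ¬ (G.deleteEdges {s(a, b)}).Reachable a z := by
  classical
  rintro ⟨p⟩
  have hb : b ∉ p.bypass.support := fun hb => isBridge_iff.mp hab ⟨p.bypass.takeUntil b hb⟩
  obtain ⟨c, hc⟩ := Walk.IsPath.exists_rel_end horient hout (p.bypass.mapLe (deleteEdges_le _))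
    ((Walk.isPath_mapLe _).mpr p.bypass_isPath) hRab
    (by rwa [Walk.support_mapLe_eq_support])
  exact hz c hc

lemma IsTree.reachable_deleteEdges_iff_rel {z : V} (hG : G.IsTree) (hz : ∀ c, ¬ R z c)
    (hab : G.Adj a b) : (G.deleteEdges {s(a, b)}).Reachable b z ↔ R a b := by
  have hbridge := hG.isAcyclic.isBridge_of_adj hab
  refine ⟨fun hbz => (horient hab).resolve_right fun hRba => ?_, fun hRab => ?_⟩
  · rw [Sym2.eq_swap] at hbridge hbz
    exact hbridge.not_reachable_deleteEdges_of_rel horient hout hRba hz hbz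
  · exact (hG.connected.reachable_deleteEdges_iff_not hbridge z).not_left.mp
      (hbridge.not_reachable_deleteEdges_of_rel horient hout hRab hz)

end Orientation

lemma IsTree.rel_or_rel_of_forall_rel_iff {R : V → V → Prop} {P : Sym2 V → Prop} {r : V}
    (hG : G.IsTree)
    (hR : ∀ a b, R a b ↔ G.Adj a b ∧ (P s(a, b) ↔ ¬ (G.deleteEdges {s(a, b)}).Reachable b r))
    (hab : G.Adj a b) : R a b ∨ R b a := by
  have hr := hG.connected.reachable_deleteEdges_iff_not
    (hG.isAcyclic.isBridge_of_adj hab) r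
  rw [hR, hR, Sym2.eq_swap (a := b)]
  tauto

end SimpleGraph

open SimpleGraph

theorem stmt9_general {V α : Type*}
    (F : SimpleGraph V) (hF : F.IsTree)
    (r : V)
    (Sfun : Sym2 V → Set α)
    (D : α → V → V → Prop)
    (hD : ∀ (w : α) (a b : V), D w a b ↔ F.Adj a b ∧
      (w ∈ Sfun s(a,b) ↔ ¬ (F.deleteEdges {s(a,b)}).Reachable b r))
    (hout : ∀ (w : α) (a b c : V), D w a b → D w a c → b = c)
    (φ : α → V) (hφ : ∀ (w : α) (x : V), ¬ D w (φ w) x)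
    (x y : α) :
    ∀ a b : V, F.Adj a b →
      (¬ (F.deleteEdges {s(a,b)}).Reachable (φ x) (φ y) ↔
        (x ∈ Sfun s(a,b) ↔ y ∉ Sfun s(a,b))) := by
  intro a b hab
  have hside (w : α) : (F.deleteEdges {s(a, b)}).Reachable b (φ w) ↔
      (w ∈ Sfun s(a, b) ↔ ¬ (F.deleteEdges {s(a, b)}).Reachable b r) := by
    have horient (u v : V) (huv : F.Adj u v) : D w u v ∨ D w v u :=
      hF.rel_or_rel_of_forall_rel_iff (P := (w ∈ Sfun ·)) (hD w) huv
    rw [hF.reachable_deleteEdges_iff_rel horient (hout w) (hφ w) hab, hD, and_iff_right hab]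
  rw [hF.connected.reachable_deleteEdges_iff
    (hF.isAcyclic.isBridge_of_adj hab), hside, hside]
  tauto

/-- In the setting of the sink map `φ` (each element `w` orients the tree `F`: edge `e`
away from the root leaf `r` iff `w ∈ S_e`, with out-degree at most 1 and sink `φ w`),
an edge `e` separates `φ x` from `φ y` iff exactly one of `x`, `y` belongs to `S_e`. -/
theorem stmt9 {V α : Type*} [Fintype V] [DecidableEq V]
    (F : SimpleGraph V) [DecidableRel F.Adj] (hF : F.IsTree)
    (r : V) (hr : F.degree r = 1)
    (Sfun : Sym2 V → Set α)
    (D : α → V → V → Prop)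
    (hD : ∀ (w : α) (a b : V), D w a b ↔ F.Adj a b ∧
      (w ∈ Sfun s(a,b) ↔ ¬ (F.deleteEdges {s(a,b)}).Reachable b r))
    (hout : ∀ (w : α) (a b c : V), D w a b → D w a c → b = c)
    (φ : α → V) (hφ : ∀ (w : α) (x : V), ¬ D w (φ w) x)
    (x y : α) :
    ∀ a b : V, F.Adj a b →
      (¬ (F.deleteEdges {s(a,b)}).Reachable (φ x) (φ y) ↔
        (x ∈ Sfun s(a,b) ↔ y ∉ Sfun s(a,b))) :=
  stmt9_general F hF r Sfun D hD hout φ hφ x y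
end

section
/- With notation as in Theorem 2: for each edge e of a tree F with leaf set W, let S_e be a minimum capacity (W_e, W\W_e)-cut in the capacitated tree T^b (where W_e is the side of e not containing root r), chosen of minimum cardinality among minimum cuts. Then for any internal node w of T, no vertex of F has two outgoing edges in the orientation where edge e points away from r iff w ∈ S_e. -/
attribute [local instance] Classical.propDecidable

open Finset SimpleGraph

private lemma walk_reach_del {VF : Type*} {F : SimpleGraph VF} (a c : VF) :
    ∀ {x y : VF}, F.Walk x y →
      (F.deleteEdges {s(a,c)}).Reachable x y ∨ (F.deleteEdges {s(a,c)}).Reachable a y ∨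
        (F.deleteEdges {s(a,c)}).Reachable c y := by
  intro x y p
  induction p with
  | nil => exact Or.inl (Reachable.refl _)
  | @cons u v z h q ih =>
    by_cases he : s(u, v) = s(a, c)
    · rcases Sym2.eq_iff.mp he with ⟨rfl, rfl⟩ | ⟨rfl, rfl⟩
      · rcases ih with h1 | h1 | h1
        · exact Or.inr (Or.inr h1)
        · exact Or.inr (Or.inl h1)
        · exact Or.inr (Or.inr h1)
      · rcases ih with h1 | h1 | h1
        · exact Or.inr (Or.inl h1)
        · exact Or.inr (Or.inl h1)
        · exact Or.inr (Or.inr h1)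
    · have hadj : (F.deleteEdges {s(a,c)}).Adj u v := by
        rw [SimpleGraph.deleteEdges_adj]
        exact ⟨h, by simpa using he⟩
      rcases ih with h1 | h1 | h1
      · exact Or.inl (hadj.reachable.trans h1)
      · exact Or.inr (Or.inl h1)
      · exact Or.inr (Or.inr h1)

private lemma split_walk {VF : Type*} {F : SimpleGraph VF} {x y : VF} (a c : VF)
    {s : Set (Sym2 VF)} (h : (F.deleteEdges s).Reachable x y) :
    (F.deleteEdges (s ∪ {s(a,c)})).Reachable x y ∨
      ((F.deleteEdges s).Reachable x a ∧ (F.deleteEdges s).Reachable a y) := by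
  obtain ⟨p⟩ := h
  by_cases ha : a ∈ p.support
  · exact Or.inr ⟨⟨p.takeUntil a ha⟩, ⟨p.dropUntil a ha⟩⟩
  · left
    refine ⟨p.transfer _ ?_⟩
    intro e hep
    have h1 : e ∈ (F.deleteEdges s).edgeSet := p.edges_subset_edgeSet hep
    rw [SimpleGraph.edgeSet_deleteEdges] at h1
    rw [SimpleGraph.edgeSet_deleteEdges]
    refine ⟨h1.1, ?_⟩
    intro hmem
    rcases hmem with hmem | hmem
    · exact h1.2 hmem
    · apply ha
      have : e = s(a, c) := hmem
      subst this
      exact p.fst_mem_support_of_mem_edges hep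

private lemma not_reach_del {VF : Type*} {F : SimpleGraph VF} (hac : F.IsAcyclic)
    {a c : VF} (hadj : F.Adj a c) : ¬ (F.deleteEdges {s(a,c)}).Reachable a c := by
  intro h
  have heq : F.deleteEdges {s(a,c)} = F \ SimpleGraph.fromEdgeSet {s(a,c)} := rfl
  rw [heq] at h
  obtain ⟨u, p, hp, -⟩ := (SimpleGraph.adj_and_reachable_delete_edges_iff_exists_cycle).mp ⟨hadj, h⟩
  exact hac p hp

private lemma repr_sum {VT : Type*} [Fintype VT] (A : Finset VT) (c : VT → VT → ℝ) :
    ∑ x ∈ A, ∑ y ∈ Aᶜ, c x y = ∑ x : VT, ∑ y : VT, if x ∈ A ∧ y ∉ A then c x y else 0 := by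
  have h1 : ∀ x : VT, ∑ y ∈ Aᶜ, c x y = ∑ y : VT, if y ∉ A then c x y else 0 := by
    intro x
    calc ∑ y ∈ Aᶜ, c x y = ∑ y ∈ univ ∩ Aᶜ, c x y := by rw [Finset.univ_inter]
      _ = ∑ y : VT, if y ∈ Aᶜ then c x y else 0 := (Finset.sum_ite_mem _ _ _).symm
      _ = ∑ y : VT, if y ∉ A then c x y else 0 := by simp [Finset.mem_compl]
  have h2 : ∑ x ∈ A, ∑ y ∈ Aᶜ, c x y = ∑ x : VT, if x ∈ A then (∑ y ∈ Aᶜ, c x y) else 0 := by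
    calc ∑ x ∈ A, ∑ y ∈ Aᶜ, c x y = ∑ x ∈ univ ∩ A, ∑ y ∈ Aᶜ, c x y := by rw [Finset.univ_inter]
      _ = _ := (Finset.sum_ite_mem _ _ _).symm
  rw [h2]
  refine Finset.sum_congr rfl fun x _ => ?_
  by_cases hx : x ∈ A
  · simp only [hx, if_pos, true_and]
    exact h1 x
  · simp [hx]

private lemma submod_point {VT : Type*} (A B : Finset VT) (x y : VT) (c : ℝ) (hc : 0 ≤ c) :
    (if x ∈ A ∩ B ∧ y ∉ A ∩ B then c else 0) + (if x ∈ A ∪ B ∧ y ∉ A ∪ B then c else 0) ≤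
      (if x ∈ A ∧ y ∉ A then c else 0) + (if x ∈ B ∧ y ∉ B then c else 0) := by
  by_cases hxa : x ∈ A <;> by_cases hxb : x ∈ B <;> by_cases hya : y ∈ A <;> by_cases hyb : y ∈ B <;>
    simp_all [Finset.mem_inter, Finset.mem_union] <;> linarith

private lemma posimod_point {VT : Type*} (A B : Finset VT) (x y : VT) (c : ℝ) (hc : 0 ≤ c) :
    ((if x ∈ A \ B ∧ y ∉ A \ B then c else 0) + (if y ∈ A \ B ∧ x ∉ A \ B then c else 0)) +
      ((if x ∈ B \ A ∧ y ∉ B \ A then c else 0) + (if y ∈ B \ A ∧ x ∉ B \ A then c else 0)) ≤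
    ((if x ∈ A ∧ y ∉ A then c else 0) + (if y ∈ A ∧ x ∉ A then c else 0)) +
      ((if x ∈ B ∧ y ∉ B then c else 0) + (if y ∈ B ∧ x ∉ B then c else 0)) := by
  by_cases hxa : x ∈ A <;> by_cases hxb : x ∈ B <;> by_cases hya : y ∈ A <;> by_cases hyb : y ∈ B <;>
    simp_all [Finset.mem_sdiff] <;> linarith

/-- For each edge `e` of the tree `F` (with root leaf `r` and leaf set `W`), let `S_e`
be a minimum-capacity, then minimum-cardinality, `(W_e, W \ W_e)` vertex cut in the
capacitated tree `T^b`, where `W_e` is the leaf set of the component of `F − e` not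
containing `r`. Then for any internal node `w` of `T`, the orientation of `F` in which
edge `e` points away from `r` iff `w ∈ S_e` has out-degree at most 1 at every vertex. -/
theorem stmt10 {VT VF W : Type*} [Fintype VT] [Fintype VF] [Fintype W]
    (T : SimpleGraph VT) [DecidableRel T.Adj] (F : SimpleGraph VF) [DecidableRel F.Adj]
    (hT : T.IsTree) (hF : F.IsTree)
    (b : Sym2 VT → ℝ) (hb : ∀ e : Sym2 VT, 0 ≤ b e)
    (tW : W → VT) (fW : W → VF)
    (htW : Function.Injective tW) (hfW : Function.Injective fW)
    (htleaf : ∀ i : W, T.degree (tW i) = 1) (htleaf' : ∀ v : VT, T.degree v = 1 → ∃ i, tW i = v)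
    (hfleaf : ∀ i : W, F.degree (fW i) = 1) (hfleaf' : ∀ v : VF, F.degree v = 1 → ∃ i, fW i = v)
    (r : VF) (hr : F.degree r = 1)
    (S : Sym2 VF → Finset VT)
    (cutcap : Finset VT → ℝ)
    (hcutcap : ∀ A : Finset VT,
      cutcap A = ∑ x ∈ A, ∑ y ∈ Aᶜ, if T.Adj x y then b s(x,y) else 0)
    (hScut : ∀ a c : VF, F.Adj a c →
      (∀ i : W, ¬ (F.deleteEdges {s(a,c)}).Reachable (fW i) r → tW i ∈ S s(a,c)) ∧
      (∀ i : W, (F.deleteEdges {s(a,c)}).Reachable (fW i) r → tW i ∉ S s(a,c)))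
    (hSmin : ∀ a c : VF, F.Adj a c → ∀ A : Finset VT,
      (∀ i : W, ¬ (F.deleteEdges {s(a,c)}).Reachable (fW i) r → tW i ∈ A) →
      (∀ i : W, (F.deleteEdges {s(a,c)}).Reachable (fW i) r → tW i ∉ A) →
      cutcap (S s(a,c)) ≤ cutcap A)
    (hScard : ∀ a c : VF, F.Adj a c → ∀ A : Finset VT,
      (∀ i : W, ¬ (F.deleteEdges {s(a,c)}).Reachable (fW i) r → tW i ∈ A) →
      (∀ i : W, (F.deleteEdges {s(a,c)}).Reachable (fW i) r → tW i ∉ A) →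
      cutcap A = cutcap (S s(a,c)) → (S s(a,c)).card ≤ A.card)
    (w : VT) (hw : ∀ i : W, tW i ≠ w) :
    ∀ a b₁ b₂ : VF,
      (F.Adj a b₁ ∧ (w ∈ S s(a,b₁) ↔ ¬ (F.deleteEdges {s(a,b₁)}).Reachable b₁ r)) →
      (F.Adj a b₂ ∧ (w ∈ S s(a,b₂) ↔ ¬ (F.deleteEdges {s(a,b₂)}).Reachable b₂ r)) →
      b₁ = b₂ := by
  -- the capacity function on ordered pairs
  set c : VT → VT → ℝ := fun x y => if T.Adj x y then b s(x,y) else 0 with hcdef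
  have hcnn : ∀ x y, 0 ≤ c x y := by
    intro x y
    dsimp [c]
    split
    · exact hb _
    · exact le_refl 0
  have hcsym : ∀ x y, c x y = c y x := by
    intro x y
    dsimp [c]
    by_cases h : T.Adj x y
    · rw [if_pos h, if_pos h.symm, Sym2.eq_swap]
    · rw [if_neg h, if_neg fun h' => h h'.symm]
  have hrepr : ∀ A : Finset VT,
      cutcap A = ∑ x : VT, ∑ y : VT, if x ∈ A ∧ y ∉ A then c x y else 0 := by
    intro A
    rw [hcutcap A]
    exact repr_sum A c
  have hrepr' : ∀ A : Finset VT,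
      (∑ x : VT, ∑ y : VT, if y ∈ A ∧ x ∉ A then c x y else 0) = cutcap A := by
    intro A
    rw [Finset.sum_comm, hrepr A]
    refine Finset.sum_congr rfl fun u _ => Finset.sum_congr rfl fun v _ => ?_
    rw [hcsym v u]
  have submod : ∀ A B : Finset VT, cutcap (A ∩ B) + cutcap (A ∪ B) ≤ cutcap A + cutcap B := by
    intro A B
    have key : (∑ x : VT, ∑ y : VT,
        ((if x ∈ A ∩ B ∧ y ∉ A ∩ B then c x y else 0) +
          (if x ∈ A ∪ B ∧ y ∉ A ∪ B then c x y else 0))) ≤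
        ∑ x : VT, ∑ y : VT,
        ((if x ∈ A ∧ y ∉ A then c x y else 0) + (if x ∈ B ∧ y ∉ B then c x y else 0)) := by
      refine Finset.sum_le_sum fun x _ => Finset.sum_le_sum fun y _ => ?_
      exact submod_point A B x y (c x y) (hcnn x y)
    simp only [Finset.sum_add_distrib] at key
    rw [hrepr (A ∩ B), hrepr (A ∪ B), hrepr A, hrepr B]
    exact key
  have posimod : ∀ A B : Finset VT, cutcap (A \ B) + cutcap (B \ A) ≤ cutcap A + cutcap B := by
    intro A B
    have key : (∑ x : VT, ∑ y : VT,
        (((if x ∈ A \ B ∧ y ∉ A \ B then c x y else 0) +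
            (if y ∈ A \ B ∧ x ∉ A \ B then c x y else 0)) +
          ((if x ∈ B \ A ∧ y ∉ B \ A then c x y else 0) +
            (if y ∈ B \ A ∧ x ∉ B \ A then c x y else 0)))) ≤
        ∑ x : VT, ∑ y : VT,
        (((if x ∈ A ∧ y ∉ A then c x y else 0) + (if y ∈ A ∧ x ∉ A then c x y else 0)) +
          ((if x ∈ B ∧ y ∉ B then c x y else 0) + (if y ∈ B ∧ x ∉ B then c x y else 0))) := by
      refine Finset.sum_le_sum fun x _ => Finset.sum_le_sum fun y _ => ?_
      exact posimod_point A B x y (c x y) (hcnn x y)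
    simp only [Finset.sum_add_distrib] at key
    have e1 := hrepr (A \ B)
    have e2 := hrepr' (A \ B)
    have e3 := hrepr (B \ A)
    have e4 := hrepr' (B \ A)
    have e5 := hrepr A
    have e6 := hrepr' A
    have e7 := hrepr B
    have e8 := hrepr' B
    linarith
  -- graph-side preliminaries
  intro a b₁ b₂ hh1 hh2
  obtain ⟨hadj₁, hiff₁⟩ := hh1
  obtain ⟨hadj₂, hiff₂⟩ := hh2
  by_contra hne
  have heq : s(a, b₁) ≠ s(a, b₂) := by
    intro h
    rcases Sym2.eq_iff.mp h with ⟨-, h'⟩ | ⟨h', -⟩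
    · exact hne h'
    · exact hadj₂.ne h'
  have hconn := hF.isConnected
  have reach3 : ∀ (u v x : VF), (F.deleteEdges {s(u,v)}).Reachable x r ∨
      (F.deleteEdges {s(u,v)}).Reachable x u ∨ (F.deleteEdges {s(u,v)}).Reachable x v := by
    intro u v x
    obtain ⟨p⟩ := hconn.preconnected r x
    rcases walk_reach_del u v p with h | h | h
    exacts [Or.inl h.symm, Or.inr (Or.inl h.symm), Or.inr (Or.inr h.symm)]
  have hE1 : ∀ u : VF, F.Adj a u → (F.deleteEdges {s(a,u)}).Reachable a r ∨
      (F.deleteEdges {s(a,u)}).Reachable u r := by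
    intro u hu
    obtain ⟨p⟩ := hconn.preconnected u r
    rcases walk_reach_del a u p with h | h | h
    exacts [Or.inr h, Or.inl h, Or.inr h]
  have hE2 : ∀ u : VF, F.Adj a u → ¬((F.deleteEdges {s(a,u)}).Reachable a r ∧
      (F.deleteEdges {s(a,u)}).Reachable u r) := by
    rintro u hu ⟨h1, h2⟩
    exact not_reach_del hF.IsAcyclic hu (h1.trans h2.symm)
  -- nesting lemma
  have nest : ∀ u v : VF, ¬(F.deleteEdges {s(a,v)}).Reachable a r →
      ∀ x, ¬(F.deleteEdges {s(a,u)}).Reachable x r →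
        ¬(F.deleteEdges {s(a,v)}).Reachable x r := by
    intro u v hnav x hx hx2
    rcases split_walk a u hx2 with h | ⟨h1, h2⟩
    · exact hx (h.mono (F.deleteEdges_anti Set.subset_union_right))
    · exact hnav h2
  -- crossing lemma
  have cross : ∀ u v : VF, F.Adj a u → F.Adj a v → s(a,u) ≠ s(a,v) →
      (F.deleteEdges {s(a,u)}).Reachable a r → (F.deleteEdges {s(a,v)}).Reachable a r →
      ∀ x, ¬(F.deleteEdges {s(a,u)}).Reachable x r → (F.deleteEdges {s(a,v)}).Reachable x r := by
    intro u v hu hv hne' hau hav x hx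
    have hxa : ¬ (F.deleteEdges {s(a,u)}).Reachable x a := fun h => hx (h.trans hau)
    have h3 : (F.deleteEdges {s(a,u)}).Reachable x u := by
      rcases reach3 a u x with h | h | h
      · exact absurd h hx
      · exact absurd h hxa
      · exact h
    rcases split_walk a v h3 with h | ⟨h1, h2⟩
    · have hxu : (F.deleteEdges {s(a,v)}).Reachable x u :=
        h.mono (F.deleteEdges_anti Set.subset_union_right)
      have hua : (F.deleteEdges {s(a,v)}).Adj u a := by
        rw [SimpleGraph.deleteEdges_adj]
        refine ⟨hu.symm, ?_⟩
        rw [Set.mem_singleton_iff, Sym2.eq_swap]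
        exact hne'
      exact (hxu.trans hua.reachable).trans hav
    · exact absurd h1 hxa
  -- case 2: one of the two edges has `a` on its far side
  have case2 : ∀ u v : VF, F.Adj a u → F.Adj a v → s(a,u) ≠ s(a,v) →
      (w ∈ S s(a,u) ↔ ¬ (F.deleteEdges {s(a,u)}).Reachable u r) →
      (w ∈ S s(a,v) ↔ ¬ (F.deleteEdges {s(a,v)}).Reachable v r) →
      ¬ (F.deleteEdges {s(a,v)}).Reachable a r → False := by
    intro u v hu hv hne' hiu hiv hnav
    have hvr : (F.deleteEdges {s(a,v)}).Reachable v r := (hE1 v hv).resolve_left hnav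
    have hwv : w ∉ S s(a,v) := fun hw' => (hiv.mp hw') hvr
    have hau : (F.deleteEdges {s(a,u)}).Reachable a r := by
      by_contra hnau
      rcases split_walk a u hvr with h | ⟨h1, h2⟩
      · have h4 : (F.deleteEdges {s(a,u)}).Reachable v r :=
          h.mono (F.deleteEdges_anti Set.subset_union_right)
        have hav' : (F.deleteEdges {s(a,u)}).Adj a v := by
          rw [SimpleGraph.deleteEdges_adj]
          refine ⟨hv, ?_⟩
          rw [Set.mem_singleton_iff]
          exact fun hh => hne' hh.symm
        exact hnau (hav'.reachable.trans h4)
      · exact hnav h2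
    have hnur : ¬ (F.deleteEdges {s(a,u)}).Reachable u r := fun h => hE2 u hu ⟨hau, h⟩
    have hwu : w ∈ S s(a,u) := hiu.mpr hnur
    have hnest := nest u v hnav
    have feas1a : ∀ i, ¬ (F.deleteEdges {s(a,u)}).Reachable (fW i) r →
        tW i ∈ S s(a,u) ∩ S s(a,v) := fun i hi =>
      Finset.mem_inter.mpr ⟨(hScut a u hu).1 i hi, (hScut a v hv).1 i (hnest _ hi)⟩
    have feas1b : ∀ i, (F.deleteEdges {s(a,u)}).Reachable (fW i) r →
        tW i ∉ S s(a,u) ∩ S s(a,v) := fun i hi hmem =>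
      (hScut a u hu).2 i hi (Finset.mem_inter.mp hmem).1
    have feas2a : ∀ i, ¬ (F.deleteEdges {s(a,v)}).Reachable (fW i) r →
        tW i ∈ S s(a,u) ∪ S s(a,v) := fun i hi =>
      Finset.mem_union.mpr (Or.inr ((hScut a v hv).1 i hi))
    have feas2b : ∀ i, (F.deleteEdges {s(a,v)}).Reachable (fW i) r →
        tW i ∉ S s(a,u) ∪ S s(a,v) := by
      intro i hi hmem
      rcases Finset.mem_union.mp hmem with h | h
      · have hru : (F.deleteEdges {s(a,u)}).Reachable (fW i) r := by
          by_contra hcc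
          exact hnest _ hcc hi
        exact (hScut a u hu).2 i hru h
      · exact (hScut a v hv).2 i hi h
    have m1 := hSmin a u hu _ feas1a feas1b
    have m2 := hSmin a v hv _ feas2a feas2b
    have sm := submod (S s(a,u)) (S s(a,v))
    have eq1 : cutcap (S s(a,u) ∩ S s(a,v)) = cutcap (S s(a,u)) := le_antisymm (by linarith) m1
    have hcard := hScard a u hu _ feas1a feas1b eq1
    have hss : S s(a,u) ∩ S s(a,v) ⊂ S s(a,u) := by
      refine ⟨Finset.inter_subset_left, fun hsub => ?_⟩
      exact hwv (Finset.mem_inter.mp (hsub hwu)).2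
    have := Finset.card_lt_card hss
    omega
  by_cases hA1r : (F.deleteEdges {s(a,b₁)}).Reachable a r
  · by_cases hA2r : (F.deleteEdges {s(a,b₂)}).Reachable a r
    · -- case 1 : both edges have `a` on the root side
      have hn1 : ¬ (F.deleteEdges {s(a,b₁)}).Reachable b₁ r := fun h => hE2 b₁ hadj₁ ⟨hA1r, h⟩
      have hn2 : ¬ (F.deleteEdges {s(a,b₂)}).Reachable b₂ r := fun h => hE2 b₂ hadj₂ ⟨hA2r, h⟩
      have hw1 : w ∈ S s(a,b₁) := hiff₁.mpr hn1
      have hw2 : w ∈ S s(a,b₂) := hiff₂.mpr hn2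
      have cross12 := cross b₁ b₂ hadj₁ hadj₂ heq hA1r hA2r
      have cross21 := cross b₂ b₁ hadj₂ hadj₁ heq.symm hA2r hA1r
      have feas1a : ∀ i, ¬ (F.deleteEdges {s(a,b₁)}).Reachable (fW i) r →
          tW i ∈ S s(a,b₁) \ S s(a,b₂) := fun i hi =>
        Finset.mem_sdiff.mpr ⟨(hScut a b₁ hadj₁).1 i hi, (hScut a b₂ hadj₂).2 i (cross12 _ hi)⟩
      have feas1b : ∀ i, (F.deleteEdges {s(a,b₁)}).Reachable (fW i) r →
          tW i ∉ S s(a,b₁) \ S s(a,b₂) := fun i hi hmem =>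
        (hScut a b₁ hadj₁).2 i hi (Finset.mem_sdiff.mp hmem).1
      have feas2a : ∀ i, ¬ (F.deleteEdges {s(a,b₂)}).Reachable (fW i) r →
          tW i ∈ S s(a,b₂) \ S s(a,b₁) := fun i hi =>
        Finset.mem_sdiff.mpr ⟨(hScut a b₂ hadj₂).1 i hi, (hScut a b₁ hadj₁).2 i (cross21 _ hi)⟩
      have feas2b : ∀ i, (F.deleteEdges {s(a,b₂)}).Reachable (fW i) r →
          tW i ∉ S s(a,b₂) \ S s(a,b₁) := fun i hi hmem =>
        (hScut a b₂ hadj₂).2 i hi (Finset.mem_sdiff.mp hmem).1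
      have m1 := hSmin a b₁ hadj₁ _ feas1a feas1b
      have m2 := hSmin a b₂ hadj₂ _ feas2a feas2b
      have pm := posimod (S s(a,b₁)) (S s(a,b₂))
      have eq1 : cutcap (S s(a,b₁) \ S s(a,b₂)) = cutcap (S s(a,b₁)) :=
        le_antisymm (by linarith) m1
      have hcard := hScard a b₁ hadj₁ _ feas1a feas1b eq1
      have hss : S s(a,b₁) \ S s(a,b₂) ⊂ S s(a,b₁) := by
        refine ⟨Finset.sdiff_subset, fun hsub => ?_⟩
        exact (Finset.mem_sdiff.mp (hsub hw1)).2 hw2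
      have := Finset.card_lt_card hss
      omega
    · exact case2 b₁ b₂ hadj₁ hadj₂ heq hiff₁ hiff₂ hA2r
  · exact case2 b₂ b₁ hadj₂ hadj₁ heq.symm hiff₂ hiff₁ hA1r
end

section
/- Let G be a connected graph with nonnegative edge costs c, and W ⊆ V(G) terminals with hose bounds b_i satisfying b_i ≤ (1/2)Σ_j b_j. For a vertex v, let cost(v) = Σ_{i∈W} b_i · d_c(i, v), where d_c is shortest-path distance. Then the hub routing at v* = argmin_v cost(v), with capacity allocation u(e) = Σ_{i∈W} b_i · [e on chosen shortest i–v* path], is a feasible solution to the robust network design problem for the hose universe H(b): every D ∈ H(b) routed via concatenated paths i→v*→j fits within u. -/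
attribute [local instance] Classical.propDecidable

/-- The cost-length of a walk: the sum of the edge costs along it (with multiplicity). -/
noncomputable def wlen {V : Type*} (G : SimpleGraph V) (c : Sym2 V → ℝ) {a b : V}
    (p : G.Walk a b) : ℝ :=
  (p.edges.map c).sum

/-- Shortest-path distance with respect to edge costs `c`. -/
noncomputable def wdist {V : Type*} (G : SimpleGraph V) (c : Sym2 V → ℝ) (a b : V) : ℝ :=
  sInf {x : ℝ | ∃ p : G.Walk a b, x = wlen G c p}

/-- Hub routing at the optimal hub `v*` (minimizing `Σᵢ bᵢ·d_c(i,v)`), with capacity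
`u(e) = Σᵢ bᵢ·[e ∈ Pᵢ]` along chosen shortest paths `Pᵢ` to `v*`, is feasible for the
hose universe `H(b)`: every hose demand routed via `i → v* → j` fits within `u`. -/
theorem stmt18 {V : Type*} [Fintype V] [DecidableEq V]
    (G : SimpleGraph V) (hG : G.Connected)
    (c : Sym2 V → ℝ) (hc : ∀ e : Sym2 V, 0 ≤ c e)
    (W : Finset V) (b : V → ℝ) (hb : ∀ i : V, 0 ≤ b i)
    (hbhalf : ∀ i ∈ W, b i ≤ (1/2 : ℝ) * ∑ j ∈ W, b j)
    (vstar : V)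
    (hvstar : ∀ v : V, ∑ i ∈ W, b i * wdist G c i vstar ≤ ∑ i ∈ W, b i * wdist G c i v)
    (P : ∀ i : V, G.Walk i vstar)
    (hPpath : ∀ i : V, (P i).IsPath)
    (hPshort : ∀ i : V, ∀ q : G.Walk i vstar, wlen G c (P i) ≤ wlen G c q)
    (u : Sym2 V → ℝ)
    (hu : ∀ e : Sym2 V, u e = ∑ i ∈ W, b i * (if e ∈ (P i).edges then (1 : ℝ) else 0)) :
    ∀ D : V → V → ℝ,
      (∀ i j : V, 0 ≤ D i j) → (∀ i j : V, D i j = D j i) → (∀ i : V, D i i = 0) →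
      (∀ i j : V, D i j ≠ 0 → i ∈ W ∧ j ∈ W) →
      (∀ i ∈ W, ∑ j ∈ W, D i j ≤ b i) →
      ∀ e : Sym2 V,
        (1/2 : ℝ) * ∑ i ∈ W, ∑ j ∈ W,
          D i j * (((P i).append (P j).reverse).edges.count e : ℝ) ≤ u e := by
  intro D hD0 hDsym hDdiag hDW hDb e
  set f : V → ℝ := fun i => (((P i).edges.count e : ℕ) : ℝ) with hf
  have hfcases : ∀ i, f i = if e ∈ (P i).edges then 1 else 0 := by
    intro i
    by_cases h : e ∈ (P i).edges
    · simp [hf, h, List.count_eq_one_of_mem ((hPpath i).edges_nodup) h]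
    · simp [hf, h, List.count_eq_zero_of_not_mem h]
  have hf0 : ∀ i, 0 ≤ f i := fun i => by rw [hfcases]; positivity
  have hcount : ∀ i j : V,
      ((((P i).append (P j).reverse).edges.count e : ℕ) : ℝ) = f i + f j := by
    intro i j
    rw [SimpleGraph.Walk.edges_append, List.count_append,
        SimpleGraph.Walk.edges_reverse, List.count_reverse]
    push_cast [hf]
    ring
  have hue : u e = ∑ i ∈ W, b i * f i := by
    rw [hu]; exact Finset.sum_congr rfl fun i _ => by rw [hfcases]
  have h1 : ∀ g : V → V → ℝ, (∀ i j, g i j = D i j) →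
      ∑ i ∈ W, ∑ j ∈ W, g i j * f i ≤ ∑ i ∈ W, b i * f i := by
    intro g hg
    refine Finset.sum_le_sum fun i hi => ?_
    rw [← Finset.sum_mul]
    refine mul_le_mul_of_nonneg_right ?_ (hf0 i)
    calc ∑ j ∈ W, g i j = ∑ j ∈ W, D i j := by simp [hg]
      _ ≤ b i := hDb i hi
  have key : ∑ i ∈ W, ∑ j ∈ W, D i j * (f i + f j) ≤ 2 * u e := by
    have e2 : ∑ i ∈ W, ∑ j ∈ W, D i j * f j
        = ∑ i ∈ W, ∑ j ∈ W, (fun i j => D j i) i j * f i := Finset.sum_comm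
    have e1 : ∑ i ∈ W, ∑ j ∈ W, D i j * (f i + f j)
        = ∑ i ∈ W, ∑ j ∈ W, D i j * f i + ∑ i ∈ W, ∑ j ∈ W, (fun i j => D j i) i j * f i := by
      simp_rw [mul_add, Finset.sum_add_distrib, e2]
    rw [e1, hue]
    have := h1 D (fun i j => rfl)
    have := h1 (fun i j => D j i) (fun i j => (hDsym j i))
    linarith
  have hc2 : ∑ i ∈ W, ∑ j ∈ W, D i j * (((P i).append (P j).reverse).edges.count e : ℝ)
      = ∑ i ∈ W, ∑ j ∈ W, D i j * (f i + f j) := by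
    refine Finset.sum_congr rfl fun i _ => Finset.sum_congr rfl fun j _ => ?_
    rw [hcount]
  rw [hc2]
  linarith
end
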